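/- Let 𝒞 be a class of graphs that is weakly sparse with parameter t₀ (no member contains K_{t₀,t₀} as a subgraph, and assume t₀²+t₀−2 ≥ 8t₀) and strongly flip-flat with flip-number k (for every r there is N_r : ℕ → ℕ such that any G ∈ 𝒞 and A ⊆ V(G) with |A| ≥ N_r(m) admits a set of at most k flips ℱ and B ⊆ A, |B| ≥ m, with B r-independent in G ⊕ ℱ). Then 𝒞 is uniformly almost-wide with constant s = k(t₀²+t₀−2): for every r there is a function N'_r such that any G ∈ 𝒞 and A ⊆ V(G) with |A| ≥ N'_r(m) admits S ⊆ V(G), |S| ≤ k(t₀²+t₀−2), and B ⊆ A, |B| ≥ m, with B r-independent in G \ S. -/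

import Mathlib

/-- The flip of a graph `G` on a pair of vertex sets `(A, B)`. -/
def gflip {V : Type*} (G : SimpleGraph V) (A B : Set V) : SimpleGraph V where
  Adj u v := u ≠ v ∧ Xor' (G.Adj u v) ((u ∈ A ∧ v ∈ B) ∨ (u ∈ B ∧ v ∈ A))
  symm := by
    constructor
    intro u v hx
    obtain ⟨h, hx⟩ := hx
    refine ⟨h.symm, ?_⟩
    have hGA : G.Adj v u ↔ G.Adj u v := ⟨fun h => h.symm, fun h => h.symm⟩
    simp only [Xor', xor_def] at *
    tauto
  loopless := by constructor; intro v hx; exact hx.1 rfl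

/-- Applying a list of flips to `G`. -/
def gflipAll {V : Type*} (G : SimpleGraph V) (L : List (Set V × Set V)) : SimpleGraph V :=
  L.foldl (fun H F => gflip H F.1 F.2) G

/-- `B` is `r`-independent in `H`. -/
def RIndep {V : Type*} (H : SimpleGraph V) (r : ℕ) (B : Set V) : Prop :=
  ∀ u ∈ B, ∀ v ∈ B, u ≠ v → ∀ p : H.Walk u v, r < p.length

/-- `B` is `r`-independent in `G \ S`. -/
def RIndepAvoid {V : Type*} (G : SimpleGraph V) (r : ℕ) (S B : Set V) : Prop :=
  ∀ u ∈ B, ∀ v ∈ B, u ≠ v → ∀ p : G.Walk u v,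
    (∀ w ∈ p.support, w ∉ S) → r < p.length

/-- `G` contains `K_{t,t}` as a subgraph. -/
def HasBiclique {V : Type*} (G : SimpleGraph V) (t : ℕ) : Prop :=
  ∃ X Y : Finset V, Disjoint X Y ∧ X.card = t ∧ Y.card = t ∧
    ∀ x ∈ X, ∀ y ∈ Y, G.Adj x y

/-- A class of (finite) graphs `C` is uniformly almost-wide with separator-size constant
`s` and margin functions `N r`: for every radius `r`, size `m`, graph `G ∈ C`, and
`A ⊆ V(G)` with `|A| ≥ N r m`, there are `S` with `|S| ≤ s` and `B ⊆ A` with `|B| ≥ m`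
such that `B` is `r`-independent in `G \ S`. -/
def UAW (C : ∀ n : ℕ, SimpleGraph (Fin n) → Prop) (s : ℕ) (N : ℕ → ℕ → ℕ) : Prop :=
  ∀ (r m n : ℕ) (G : SimpleGraph (Fin n)), C n G →
    ∀ A : Finset (Fin n), N r m ≤ A.card →
      ∃ S : Finset (Fin n), S.card ≤ s ∧
        ∃ B ⊆ A, m ≤ B.card ∧ Disjoint B S ∧ RIndepAvoid G r ↑S ↑B

/-- A class of (finite) graphs `C` is strongly flip-flat with flip-number `s` and margin
functions `N r`: for every radius `r`, size `m`, graph `G ∈ C`, and `A ⊆ V(G)` with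
`|A| ≥ N r m`, there are a set of at most `s` flips `ℱ` and `B ⊆ A` with `|B| ≥ m`
such that `B` is `r`-independent in `G ⊕ ℱ`. -/
def SFF (C : ∀ n : ℕ, SimpleGraph (Fin n) → Prop) (s : ℕ) (N : ℕ → ℕ → ℕ) : Prop :=
  ∀ (r m n : ℕ) (G : SimpleGraph (Fin n)), C n G →
    ∀ A : Finset (Fin n), N r m ≤ A.card →
      ∃ L : List (Set (Fin n) × Set (Fin n)), L.length ≤ s ∧
        ∃ B ⊆ A, m ≤ B.card ∧ RIndep (gflipAll G L) r ↑B

/-!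
Over `𝔽₂`, the pairs of vertices toggled by the flips `ℱ` are, off the diagonal, the support
of a symmetric matrix `M` of rank at most `3|ℱ|`. Start from `B` that is `(2r+2)`-independent in
`H = G ⊕ ℱ`. By Ramsey, either many vertices of `B` are `r`-independent in `G` (and we stop), or
many are pairwise `r`-close in `G`. A short `G`-path between two of them must use a toggled pair,
so each of them is `H`-close to a vertex with a nonzero row of `M`; these representatives are
pairwise at `H`-distance more than `2`. Pigeonholing the at most `2 ^ rank M` rows yields `2t₀`
representatives with a common row `y`; `K_{t₀,t₀}`-freeness forces `y` to vanish on them and to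
have fewer than `t₀` nonzero entries. Deleting the support of `y` kills a nonzero row, so the rank
drops. After at most `3k` rounds `M` vanishes off the deleted set `S`, where `G \ S` and `H \ S`
agree; and `|S| ≤ 3k t₀ ≤ k (t₀² + t₀ - 2)`.
-/

open Finset

namespace SimpleGraph

variable {V : Type*} {G H : SimpleGraph V} {S : Set V} {ℓ ℓ' : ℕ} {u v w : V}

def ReachWithin (G : SimpleGraph V) (S : Set V) (ℓ : ℕ) (u v : V) : Prop :=
  ∃ p : G.Walk u v, p.length ≤ ℓ ∧ ∀ x ∈ p.support, x ∉ S

lemma reachWithin_refl (hu : u ∉ S) : G.ReachWithin S ℓ u u :=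
  ⟨Walk.nil, Nat.zero_le _, by simpa using hu⟩

namespace ReachWithin

lemma mono_length (h : G.ReachWithin S ℓ u v) (hℓ : ℓ ≤ ℓ') : G.ReachWithin S ℓ' u v :=
  let ⟨p, hp, hpS⟩ := h
  ⟨p, hp.trans hℓ, hpS⟩

lemma symm (h : G.ReachWithin S ℓ u v) : G.ReachWithin S ℓ v u :=
  let ⟨p, hp, hpS⟩ := h
  ⟨p.reverse, by simpa using hp, fun x hx => hpS x (by simpa using hx)⟩

instance : Std.Symm (G.ReachWithin S ℓ) :=
  ⟨fun _ _ h => h.symm⟩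

lemma trans (h₁ : G.ReachWithin S ℓ u v) (h₂ : G.ReachWithin S ℓ' v w) :
    G.ReachWithin S (ℓ + ℓ') u w := by
  obtain ⟨p, hp, hpS⟩ := h₁
  obtain ⟨q, hq, hqS⟩ := h₂
  refine ⟨p.append q, by simp only [Walk.length_append]; omega, fun x hx => ?_⟩
  rcases (Walk.mem_support_append_iff p q).mp hx with hx | hx
  exacts [hpS x hx, hqS x hx]

lemma of_adj (h : G.Adj u v) (hu : u ∉ S) (hv : v ∉ S) : G.ReachWithin S 1 u v :=
  ⟨h.toWalk, by simp, by simp [hu, hv]⟩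

lemma or_exists_adj_not_adj (h : G.ReachWithin S ℓ u v) (H : SimpleGraph V) :
    H.ReachWithin S ℓ u v ∨
      ∃ a b, G.Adj a b ∧ ¬H.Adj a b ∧ a ∉ S ∧ b ∉ S ∧ H.ReachWithin S ℓ u a := by
  obtain ⟨p, hp, hpS⟩ := h
  induction p generalizing ℓ with
  | nil => exact Or.inl ⟨Walk.nil, Nat.zero_le _, hpS⟩
  | @cons u w v huw p ih =>
    have hu : u ∉ S := hpS u (by simp)
    have hw : w ∉ S := hpS w (by simp)
    rw [Walk.length_cons] at hp
    by_cases hH : H.Adj u w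
    · have hstep : H.ReachWithin S 1 u w := of_adj hH hu hw
      rcases ih (ℓ := ℓ - 1) (by omega) fun x hx => hpS x (by simp [hx]) with
        h | ⟨a, b, hab, hnab, ha, hb, hwa⟩
      · exact Or.inl ((hstep.trans h).mono_length (by omega))
      · exact Or.inr ⟨a, b, hab, hnab, ha, hb, (hstep.trans hwa).mono_length (by omega)⟩
    · exact Or.inr ⟨u, w, huw, hH, hu, hw, reachWithin_refl hu⟩

end ReachWithin

end SimpleGraph

open SimpleGraph

section Independence

variable {V : Type*} {G H : SimpleGraph V} {S S' B B' : Set V} {ℓ ℓ' : ℕ}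

lemma rIndepAvoid_iff :
    RIndepAvoid G ℓ S B ↔ B.Pairwise fun u v => ¬G.ReachWithin S ℓ u v := by
  refine ⟨fun h u hu v hv huv ⟨p, hp, hpS⟩ => (h u hu v hv huv p hpS).not_ge hp,
    fun h u hu v hv huv p hpS => ?_⟩
  by_contra! hp
  exact h hu hv huv ⟨p, hp, hpS⟩

lemma RIndepAvoid.mono (h : RIndepAvoid G ℓ S B) (hℓ : ℓ' ≤ ℓ) (hS : S ⊆ S') (hB : B' ⊆ B) :
    RIndepAvoid G ℓ' S' B' :=
  fun u hu v hv huv p hpS =>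
    hℓ.trans_lt (h u (hB hu) v (hB hv) huv p fun x hx hxS => hpS x hx (hS hxS))

lemma RIndepAvoid.of_adj_imp (h : RIndepAvoid H ℓ S B)
    (hGH : ∀ a b, a ∉ S → b ∉ S → G.Adj a b → H.Adj a b) : RIndepAvoid G ℓ S B := by
  rw [rIndepAvoid_iff] at h ⊢
  refine h.imp fun u v hH hG => ?_
  rcases hG.or_exists_adj_not_adj H with hH' | ⟨a, b, hab, hnab, ha, hb, -⟩
  exacts [hH hH', hnab (hGH a b ha hb hab)]

end Independence

section Biclique

variable {V : Type*} {G : SimpleGraph V} {t : ℕ}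

lemma hasBiclique_zero (G : SimpleGraph V) : HasBiclique G 0 :=
  ⟨∅, ∅, by simp⟩

lemma pos_of_not_hasBiclique (h : ¬HasBiclique G t) : 0 < t :=
  Nat.pos_of_ne_zero fun ht => h (ht ▸ hasBiclique_zero G)

lemma hasBiclique_of_isClique [DecidableEq V] {T : Finset V} (hT : 2 * t ≤ T.card)
    (hclique : G.IsClique (T : Set V)) : HasBiclique G t := by
  obtain ⟨X, hXT, hX⟩ := exists_subset_card_eq (show t ≤ T.card by omega)
  obtain ⟨Y, hYT, hY⟩ := exists_subset_card_eq (show t ≤ (T \ X).card by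
    rw [card_sdiff_of_subset hXT]; omega)
  refine ⟨X, Y, disjoint_of_subset_right hYT disjoint_sdiff, hX, hY, fun x hx y hy => ?_⟩
  have hy' := mem_sdiff.mp (hYT hy)
  exact hclique (hXT hx) hy'.1 (ne_of_mem_of_not_mem hx hy'.2)

lemma hasBiclique_of_forall_exists_adj [DecidableEq V] {W T : Finset V} (hWT : Disjoint W T)
    (hW : t ≤ W.card) (hT : 2 * t ≤ T.card)
    (hadj : ∀ w ∈ W, ∃ x, ∀ a ∈ T, a ≠ x → G.Adj w a) : HasBiclique G t := by
  obtain ⟨X, hXW, hX⟩ := exists_subset_card_eq hW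
  choose! f hf using hadj
  obtain ⟨Y, hYT, hY⟩ := exists_subset_card_eq (show t ≤ (T \ X.image f).card by
    have := le_card_sdiff (X.image f) T
    have := card_image_le (s := X) (f := f)
    omega)
  refine ⟨X, Y, disjoint_of_subset_left hXW (disjoint_of_subset_right (hYT.trans sdiff_subset) hWT),
    hX, hY, fun x hx y hy => ?_⟩
  have hy' := mem_sdiff.mp (hYT hy)
  exact hf x (hXW hx) y hy'.1 fun h => hy'.2 (h ▸ mem_image_of_mem f hx)

end Biclique

def ramseyBound : ℕ → ℕ → ℕ
  | 0, _ => 0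
  | _ + 1, 0 => 0
  | a + 1, b + 1 => ramseyBound a (b + 1) + ramseyBound (a + 1) b + 1

namespace Finset

variable {α : Type*} [DecidableEq α] {R : α → α → Prop}

lemma exists_insert_pairwise [Std.Symm R] {s T : Finset α} {x : α} (hx : x ∈ s)
    (hTs : ∀ y ∈ T, y ∈ s ∧ y ≠ x ∧ R x y) (hT : (T : Set α).Pairwise R) :
    insert x T ⊆ s ∧ T.card + 1 = (insert x T).card ∧
      ((insert x T : Finset α) : Set α).Pairwise R := by
  have hxT : x ∉ T := fun h => (hTs x h).2.1 rfl
  refine ⟨insert_subset hx fun y hy => (hTs y hy).1, (card_insert_of_notMem hxT).symm, ?_⟩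
  rw [coe_insert]
  exact hT.insert_of_symm fun y hy _ => (hTs y hy).2.2

theorem exists_pairwise_or_pairwise_not [Std.Symm R] (a b : ℕ) (s : Finset α)
    (hs : ramseyBound a b ≤ s.card) :
    (∃ T ⊆ s, a ≤ T.card ∧ (T : Set α).Pairwise R) ∨
      ∃ T ⊆ s, b ≤ T.card ∧ (T : Set α).Pairwise fun x y => ¬R x y := by
  classical
  have : Std.Symm fun x y => ¬R x y := ⟨fun _ _ h h' => h (Std.Symm.symm _ _ h')⟩
  induction a, b using ramseyBound.induct generalizing s with
  | case1 => exact Or.inl ⟨∅, empty_subset s, by simp⟩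
  | case2 => exact Or.inr ⟨∅, empty_subset s, by simp⟩
  | case3 a b ih₁ ih₂ =>
    rw [ramseyBound] at hs
    obtain ⟨x, hx⟩ : s.Nonempty := card_pos.mp (by omega)
    set P := (s.erase x).filter (R x)
    set Q := (s.erase x).filter fun y => ¬R x y
    have hPQ : P.card + Q.card + 1 = s.card := by
      rw [card_filter_add_card_filter_not, card_erase_add_one hx]
    have hPs : P ⊆ s := (filter_subset _ _).trans (erase_subset x s)
    have hQs : Q ⊆ s := (filter_subset _ _).trans (erase_subset x s)
    by_cases hP : ramseyBound a (b + 1) ≤ P.card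
    · rcases ih₁ P hP with ⟨T, hTP, hTa, hT⟩ | ⟨T, hTP, hTb, hT⟩
      · obtain ⟨hsub, hcard, hT'⟩ := exists_insert_pairwise hx (fun y hy => by
          simpa [P, and_assoc, and_comm, and_left_comm] using hTP hy) hT
        exact Or.inl ⟨insert x T, hsub, by omega, hT'⟩
      · exact Or.inr ⟨T, hTP.trans hPs, hTb, hT⟩
    · rcases ih₂ Q (by omega) with ⟨T, hTQ, hTa, hT⟩ | ⟨T, hTQ, hTb, hT⟩
      · exact Or.inl ⟨T, hTQ.trans hQs, hTa, hT⟩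
      · obtain ⟨hsub, hcard, hT'⟩ := exists_insert_pairwise (R := fun x y => ¬R x y) hx
          (fun y hy => by simpa [Q, and_assoc, and_comm, and_left_comm] using hTQ hy) hT
        exact Or.inr ⟨insert x T, hsub, by omega, hT'⟩

end Finset

namespace Matrix

section Rank

variable {m n K : Type*} [Fintype n] [Field K]

lemma rank_add_le (A B : Matrix m n K) : (A + B).rank ≤ A.rank + B.rank := by
  unfold rank
  rw [mulVecLin_add]
  exact (Submodule.finrank_mono (LinearMap.range_add_le _ _)).trans
    (Submodule.finrank_add_le_finrank_add_finrank _ _)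

variable [Fintype m]

lemma eq_zero_of_rank_eq_zero {A : Matrix m n K} (h : A.rank = 0) : A = 0 := by
  rw [rank_eq_finrank_span_row, Submodule.finrank_eq_zero, Submodule.span_eq_bot] at h
  ext i j
  simpa using congrFun (h _ ⟨i, rfl⟩) j

lemma card_image_row_le [Finite K] [DecidableEq K] (A : Matrix m n K) :
    (univ.image A.row).card ≤ Nat.card K ^ A.rank := by
  rw [rank_eq_finrank_span_row, ← Module.natCard_eq_pow_finrank, ← Set.ncard_coe_finset]
  refine (Set.ncard_le_ncard ?_ (Set.toFinite _)).trans (Nat.card_coe_set_eq _).ge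
  intro x hx
  obtain ⟨i, -, rfl⟩ := mem_image.mp hx
  exact Submodule.subset_span ⟨i, rfl⟩

end Rank

variable {n α : Type*} [DecidableEq n]

def zeroRowsCols [Zero α] (A : Matrix n n α) (S : Finset n) : Matrix n n α :=
  of fun p q => if p ∈ S ∨ q ∈ S then 0 else A p q

variable {K : Type*} [Fintype n] [Field K]

/-- The rows of `A.zeroRowsCols S` lie in the image of the row space under the projection
killing the coordinates in `S`, and that projection kills the row `A a`. -/
lemma rank_zeroRowsCols_lt {A : Matrix n n K} {S : Finset n} {a : n} (ha : A a ≠ 0)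
    (hS : ∀ q ∉ S, A a q = 0) : (A.zeroRowsCols S).rank < A.rank := by
  rw [rank_eq_finrank_span_row, rank_eq_finrank_span_row]
  let π : (n → K) →ₗ[K] n → K := LinearMap.pi fun q => if q ∈ S then 0 else LinearMap.proj q
  have hπ : ∀ f q, π f q = if q ∈ S then 0 else f q := fun f q => by
    by_cases hq : q ∈ S <;> simp [π, hq]
  set W := Submodule.span K (Set.range A.row)
  have hle : Submodule.span K (Set.range (A.zeroRowsCols S).row) ≤ W.map π := by
    rw [Submodule.span_le]
    rintro _ ⟨p, rfl⟩
    by_cases hp : p ∈ S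
    · have : (A.zeroRowsCols S).row p = 0 := by ext q; simp [zeroRowsCols, row, hp]
      rw [this]
      exact zero_mem _
    · refine ⟨A p, Submodule.subset_span ⟨p, rfl⟩, ?_⟩
      ext q
      simp [hπ, zeroRowsCols, row, hp]
  let x : W := ⟨A a, Submodule.subset_span ⟨a, rfl⟩⟩
  have hx : x ∈ LinearMap.ker (π.domRestrict W) := by
    ext q
    by_cases hq : q ∈ S <;> simp [x, hπ, hq, hS]
  have hker : 0 < Module.finrank K (LinearMap.ker (π.domRestrict W)) :=
    Module.finrank_pos_iff_exists_ne_zero.mpr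
      ⟨⟨x, hx⟩, fun h => ha (congrArg Subtype.val (congrArg Subtype.val h))⟩
  have hrn := (π.domRestrict W).finrank_range_add_finrank_ker
  rw [LinearMap.range_domRestrict] at hrn
  have := Submodule.finrank_mono hle
  omega

end Matrix

lemma ZMod.eq_one_of_ne_zero_two : ∀ {x : ZMod 2}, x ≠ 0 → x = 1 := by
  decide

lemma ZMod.add_eq_one_iff_two : ∀ x y : ZMod 2, x + y = 1 ↔ ¬(x = 1 ↔ y = 1) := by
  decide

section Toggle

variable {V : Type*} {G H : SimpleGraph V}

/-- The diagonal is left free: the flip matrices below have nonzero diagonal entries. -/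
def IsToggleMatrix (G H : SimpleGraph V) (S : Finset V) (M : Matrix V V (ZMod 2)) : Prop :=
  M.IsSymm ∧ ∀ p q, p ≠ q → (M p q = 1 ↔ p ∉ S ∧ q ∉ S ∧ ¬(G.Adj p q ↔ H.Adj p q))

lemma IsToggleMatrix.zeroRowsCols [DecidableEq V] {S : Finset V} {M : Matrix V V (ZMod 2)}
    (hM : IsToggleMatrix G H S M) (S' : Finset V) :
    IsToggleMatrix G H (S ∪ S') (M.zeroRowsCols S') := by
  refine ⟨Matrix.IsSymm.ext fun p q => ?_, fun p q hpq => ?_⟩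
  · simp only [Matrix.zeroRowsCols, Matrix.of_apply, or_comm, hM.1.apply]
  · simp only [Matrix.zeroRowsCols, Matrix.of_apply, mem_union]
    split_ifs with h
    · simp only [zero_ne_one, false_iff]
      tauto
    · rw [hM.2 p q hpq]
      tauto

/-- The pair `{p, q}` is flipped iff `p ∈ A, q ∈ B` or `p ∈ B, q ∈ A`; over `𝔽₂` the last
term corrects for the pairs inside `A ∩ B`, counted twice by the first two. -/
noncomputable def flipMatrix (A B : Set V) : Matrix V V (ZMod 2) :=
  Matrix.vecMulVec (A.indicator 1) (B.indicator 1) +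
    Matrix.vecMulVec (B.indicator 1) (A.indicator 1) +
    Matrix.vecMulVec ((A ∩ B).indicator 1) ((A ∩ B).indicator 1)

noncomputable def flipsMatrix (L : List (Set V × Set V)) : Matrix V V (ZMod 2) :=
  (L.map fun F => flipMatrix F.1 F.2).sum

lemma isSymm_flipMatrix (A B : Set V) : (flipMatrix A B).IsSymm := by
  simp only [Matrix.IsSymm, flipMatrix, Matrix.transpose_add, Matrix.transpose_vecMulVec,
    add_comm (Matrix.vecMulVec (B.indicator 1) _)]

lemma flipMatrix_apply_eq_one_iff {A B : Set V} {p q : V} (hpq : p ≠ q) :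
    flipMatrix A B p q = 1 ↔ ¬(G.Adj p q ↔ (gflip G A B).Adj p q) := by
  classical
  have hflip : flipMatrix A B p q = 1 ↔ p ∈ A ∧ q ∈ B ∨ p ∈ B ∧ q ∈ A := by
    simp only [flipMatrix, Matrix.add_apply, Matrix.vecMulVec_apply, Set.indicator_apply,
      Set.mem_inter_iff, Pi.one_apply]
    by_cases hpA : p ∈ A <;> by_cases hpB : p ∈ B <;> by_cases hqA : q ∈ A <;>
      by_cases hqB : q ∈ B <;> simp [hpA, hpB, hqA, hqB, CharTwo.add_self_eq_zero]
  simp only [hflip, gflip, ne_eq, hpq, not_false_eq_true, true_and]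
  show _ ↔ ¬(_ ↔ Xor _ _)
  rw [xor_iff_not_iff]
  tauto

lemma isToggleMatrix_flipsMatrix (G : SimpleGraph V) (L : List (Set V × Set V)) :
    IsToggleMatrix G (gflipAll G L) ∅ (flipsMatrix L) := by
  induction L generalizing G with
  | nil => exact ⟨Matrix.isSymm_zero, fun p q _ => by simp [flipsMatrix, gflipAll]⟩
  | cons F L ih =>
    obtain ⟨hsymm, hL⟩ := ih (gflip G F.1 F.2)
    refine ⟨(isSymm_flipMatrix F.1 F.2).add hsymm, fun p q hpq => ?_⟩
    change flipMatrix F.1 F.2 p q + flipsMatrix L p q = 1 ↔ _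
    rw [ZMod.add_eq_one_iff_two, flipMatrix_apply_eq_one_iff (G := G) hpq, hL p q hpq]
    simp only [notMem_empty, not_false_eq_true, true_and]
    change _ ↔ ¬(G.Adj p q ↔ (gflipAll (gflip G F.1 F.2) L).Adj p q)
    tauto

variable [Fintype V]

lemma rank_flipMatrix_le (A B : Set V) : (flipMatrix A B).rank ≤ 3 :=
  (Matrix.rank_add_le _ _).trans <| add_le_add ((Matrix.rank_add_le _ _).trans <|
    add_le_add (Matrix.rank_vecMulVec_le _ _) (Matrix.rank_vecMulVec_le _ _))
    (Matrix.rank_vecMulVec_le _ _)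

lemma rank_flipsMatrix_le (L : List (Set V × Set V)) : (flipsMatrix L).rank ≤ 3 * L.length := by
  induction L with
  | nil => simp [flipsMatrix]
  | cons F L ih =>
    have := (Matrix.rank_add_le (flipMatrix F.1 F.2) (flipsMatrix L)).trans
      (add_le_add (rank_flipMatrix_le F.1 F.2) ih)
    simp only [flipsMatrix, List.map_cons, List.sum_cons, List.length_cons] at this ⊢
    omega

end Toggle

section Separation

variable {V : Type*} {G H : SimpleGraph V} {S : Finset V} {M : Matrix V V (ZMod 2)} {t r : ℕ}

lemma pairwise_image_not_reachWithin [DecidableEq V] {D : Finset V} {c : V → V}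
    (hfar : (D : Set V).Pairwise fun u v => ¬H.ReachWithin S (2 * r + 2) u v)
    (hc : ∀ u ∈ D, H.ReachWithin S r u (c u)) :
    Set.InjOn c D ∧
      ((D.image c : Finset V) : Set V).Pairwise fun a a' => ¬H.ReachWithin S 2 a a' := by
  have hinj : Set.InjOn c D := fun u hu u' hu' h => by
    by_contra hne
    have : H.ReachWithin S (r + r) u u' := (hc u hu).trans (h ▸ (hc u' hu').symm)
    exact hfar hu hu' hne (this.mono_length (by omega))
  refine ⟨hinj, ?_⟩
  rw [coe_image, hinj.pairwise_image]
  exact fun u hu u' hu' hne h =>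
    hfar hu hu' hne ((((hc u hu).trans h).trans (hc u' hu').symm).mono_length (by omega))

namespace IsToggleMatrix

lemma exists_row_ne_zero (hM : IsToggleMatrix G H S M) {u v : V}
    (hG : G.ReachWithin S r u v) (hH : ¬H.ReachWithin S r u v) :
    ∃ a, H.ReachWithin S r u a ∧ M a ≠ 0 := by
  rcases hG.or_exists_adj_not_adj H with h | ⟨a, b, hab, hnab, ha, hb, hua⟩
  · exact absurd h hH
  refine ⟨a, hua, fun h0 => ?_⟩
  have : M a b = 1 := (hM.2 a b hab.ne).2 ⟨ha, hb, fun h => hnab (h.1 hab)⟩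
  simp [h0] at this

variable {T : Finset V} {y : V → ZMod 2}

lemma adj_of_apply_eq_one (hM : IsToggleMatrix G H S M)
    (hsep : (T : Set V).Pairwise fun a a' => ¬H.ReachWithin S 2 a a') {a a' : V} (ha : a ∈ T)
    (ha' : a' ∈ T) (hne : a ≠ a') (h : M a a' = 1) : G.Adj a a' := by
  obtain ⟨haS, ha'S, htog⟩ := (hM.2 a a' hne).1 h
  by_contra hG
  exact htog ⟨fun h => absurd h hG,
    fun h => (hsep ha ha' hne ((ReachWithin.of_adj h haS ha'S).mono_length one_le_two)).elim⟩

variable [DecidableEq V]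

/-- By symmetry, rows that agree on `T` make `M` constant on `T × T`; the constant `1` would
make `T` a clique of `G`. -/
lemma row_eq_zero (hbic : ¬HasBiclique G t) (hM : IsToggleMatrix G H S M) (hT : 2 * t ≤ T.card)
    (hrow : ∀ a ∈ T, M a = y) (hsep : (T : Set V).Pairwise fun a a' => ¬H.ReachWithin S 2 a a') :
    ∀ a ∈ T, y a = 0 := by
  have hconst : ∀ a ∈ T, ∀ a' ∈ T, M a a' = y a := fun a ha a' ha' => by
    rw [← hM.1.apply, hrow a' ha']
  by_contra! ⟨a₀, ha₀, hy⟩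
  refine hbic (hasBiclique_of_isClique hT fun a ha a' ha' hne => ?_)
  refine hM.adj_of_apply_eq_one hsep ha ha' hne ?_
  have hya : y a = y a₀ := by rw [← hconst a ha a₀ ha₀, hrow a ha]
  rw [hconst a ha a' ha', hya]
  exact ZMod.eq_one_of_ne_zero_two hy

/-- A vertex `w` in the support of `y` is toggled with all of `T`, and `H`-adjacent to at most
one vertex of `T`; so `t` such vertices and `T` would span a `K_{t,t}` in `G`. -/
lemma card_support_lt [Fintype V] (hbic : ¬HasBiclique G t) (hM : IsToggleMatrix G H S M)
    (hT : 2 * t ≤ T.card) (hrow : ∀ a ∈ T, M a = y)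
    (hsep : (T : Set V).Pairwise fun a a' => ¬H.ReachWithin S 2 a a') :
    (univ.filter (y · ≠ 0)).card < t := by
  have hzero := hM.row_eq_zero hbic hT hrow hsep
  by_contra! hW
  refine hbic (hasBiclique_of_forall_exists_adj (W := univ.filter (y · ≠ 0)) ?_ hW hT ?_)
  · exact disjoint_left.mpr fun w hw hwT => (mem_filter.mp hw).2 (hzero w hwT)
  intro w hw
  have hwy : y w ≠ 0 := (mem_filter.mp hw).2
  have hHadj : ∀ a ∈ T, ¬G.Adj w a → w ∉ S ∧ a ∉ S ∧ H.Adj w a := fun a ha hG => by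
    have hwa : w ≠ a := fun h => hwy (h ▸ hzero a ha)
    have h1 : M w a = 1 := by
      rw [hM.1.apply, hrow a ha]
      exact ZMod.eq_one_of_ne_zero_two hwy
    obtain ⟨hwS, haS, htog⟩ := (hM.2 w a hwa).1 h1
    exact ⟨hwS, haS, by tauto⟩
  by_contra! hmiss
  obtain ⟨a, ha, -, haG⟩ := hmiss w
  obtain ⟨a', ha', ha'a, ha'G⟩ := hmiss a
  obtain ⟨hwS, haS, hwa⟩ := hHadj a ha haG
  obtain ⟨-, ha'S, hwa'⟩ := hHadj a' ha' ha'G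
  exact hsep ha ha' ha'a.symm
    ((ReachWithin.of_adj hwa.symm haS hwS).trans (ReachWithin.of_adj hwa' hwS ha'S))

variable [Fintype V]

theorem exists_rank_zeroRowsCols_lt (hbic : ¬HasBiclique G t) (hM : IsToggleMatrix G H S M)
    {D : Finset V} (hfar : (D : Set V).Pairwise fun u v => ¬H.ReachWithin S (2 * r + 2) u v)
    (hclose : (D : Set V).Pairwise (G.ReachWithin S r)) (hD : 2 ^ M.rank * (2 * t - 1) < D.card) :
    ∃ S' : Finset V, S'.card < t ∧ (M.zeroRowsCols S').rank < M.rank := by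
  have ht := pos_of_not_hasBiclique hbic
  have hnear : ∀ u ∈ D, ∃ a, H.ReachWithin S r u a ∧ M a ≠ 0 := fun u hu => by
    have : 1 ≤ 2 ^ M.rank * (2 * t - 1) := Nat.mul_pos (Nat.two_pow_pos _) (by omega)
    obtain ⟨v, hv, hvu⟩ := D.exists_mem_ne (by omega) u
    exact hM.exists_row_ne_zero (hclose hu hv hvu.symm)
      fun h => hfar hu hv hvu.symm (h.mono_length (by omega))
  choose! c hcu hc0 using hnear
  have hrows : (univ.image M.row).card * (2 * t - 1) < D.card := by
    have := M.card_image_row_le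
    rw [Nat.card_zmod] at this
    exact (Nat.mul_le_mul_right _ this).trans_lt hD
  obtain ⟨y, -, hy⟩ := exists_lt_card_fiber_of_mul_lt_card_of_maps_to (f := fun u => M (c u))
    (fun u _ => mem_image_of_mem M.row (mem_univ (c u))) hrows
  set D' := D.filter fun u => M (c u) = y
  obtain ⟨hinj, hsep⟩ := pairwise_image_not_reachWithin (D := D')
    (Set.Pairwise.mono (coe_subset.mpr (filter_subset _ D)) hfar)
    fun u hu => hcu u (mem_filter.mp hu).1
  have hT : 2 * t ≤ (D'.image c).card := by
    rw [card_image_of_injOn hinj]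
    omega
  have hrow : ∀ a ∈ D'.image c, M a = y := by
    intro a ha
    obtain ⟨u, hu, rfl⟩ := mem_image.mp ha
    exact (mem_filter.mp hu).2
  obtain ⟨u, hu⟩ : D'.Nonempty := card_pos.mp (by omega)
  refine ⟨univ.filter (y · ≠ 0), hM.card_support_lt hbic hT hrow hsep,
    Matrix.rank_zeroRowsCols_lt (hc0 u (mem_filter.mp hu).1) fun q hq => ?_⟩
  rw [(mem_filter.mp hu).2]
  simpa using hq

end IsToggleMatrix

/-- A round at rank `≤ s + 1` needs a Ramsey clique large enough to pigeonhole `2 ^ (s + 1)`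
rows into a class of `2t` vertices, and deletes fewer than `t` vertices of `B`. -/
def deletionBound (t : ℕ) : ℕ → ℕ → ℕ
  | 0, m => m
  | s + 1, m => max (ramseyBound (2 ^ (s + 1) * (2 * t - 1) + 1) m) (deletionBound t s m + t)

variable [DecidableEq V] [Fintype V]

theorem IsToggleMatrix.exists_rIndepAvoid (hM : IsToggleMatrix G H S M)
    (hbic : ¬HasBiclique G t) {s : ℕ} (hrank : M.rank ≤ s) {B : Finset V} (hBS : Disjoint B S)
    (hB : RIndepAvoid H (2 * r + 2) S B) (m : ℕ) (hcard : deletionBound t s m ≤ B.card) :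
    ∃ S' : Finset V, S'.card ≤ s * t ∧
      ∃ B' ⊆ B, m ≤ B'.card ∧ Disjoint B' (S ∪ S') ∧ RIndepAvoid G r ↑(S ∪ S') ↑B' := by
  induction s generalizing S B M with
  | zero =>
    have hM0 := Matrix.eq_zero_of_rank_eq_zero (Nat.le_zero.mp hrank)
    refine ⟨∅, by simp, B, subset_rfl, hcard, by simpa using hBS, ?_⟩
    rw [union_empty]
    refine (hB.mono (by omega) subset_rfl subset_rfl).of_adj_imp fun a b ha hb hab => ?_
    by_contra hH
    have := (hM.2 a b hab.ne).2 ⟨ha, hb, fun h => hH (h.1 hab)⟩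
    simp [hM0] at this
  | succ s ih =>
    rw [deletionBound, max_le_iff] at hcard
    rcases exists_pairwise_or_pairwise_not (R := G.ReachWithin S r) _ m B hcard.1 with
      ⟨D, hDB, hD, hclose⟩ | ⟨B', hB'B, hB', hfar⟩
    · have hDrank : 2 ^ M.rank * (2 * t - 1) < D.card :=
        (Nat.mul_le_mul_right _ (Nat.pow_le_pow_right two_pos hrank)).trans_lt hD
      obtain ⟨S₁, hS₁, hrank₁⟩ := hM.exists_rank_zeroRowsCols_lt hbic
        (Set.Pairwise.mono (coe_subset.mpr hDB) (rIndepAvoid_iff.mp hB)) hclose hDrank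
      obtain ⟨S₂, hS₂, B', hB'B, hB', hB'S, hB'r⟩ := ih (hM.zeroRowsCols S₁) (by omega)
        (disjoint_union_right.mpr ⟨disjoint_of_subset_left sdiff_subset hBS, sdiff_disjoint⟩)
        (hB.mono le_rfl (coe_subset.mpr subset_union_left) (coe_subset.mpr sdiff_subset))
        (by have := le_card_sdiff S₁ B; omega)
      refine ⟨S₁ ∪ S₂, ?_, B', hB'B.trans sdiff_subset, hB', by rwa [← union_assoc],
        by rwa [← union_assoc]⟩
      have := card_union_le S₁ S₂
      rw [add_one_mul]
      omega
    · exact ⟨∅, by simp, B', hB'B, hB', by simpa using disjoint_of_subset_left hB'B hBS,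
        by simpa [rIndepAvoid_iff] using hfar⟩

end Separation

theorem sff_weaklySparse_implies_uaw_general (C : ∀ n : ℕ, SimpleGraph (Fin n) → Prop)
    (t₀ k : ℕ) (N : ℕ → ℕ → ℕ) (hbig : 8 * t₀ ≤ t₀ ^ 2 + t₀ - 2)
    (hws : ∀ (n : ℕ) (G : SimpleGraph (Fin n)), C n G → ¬ HasBiclique G t₀)
    (hsff : SFF C k N) :
    ∃ N' : ℕ → ℕ → ℕ, UAW C (k * (t₀ ^ 2 + t₀ - 2)) N' := by
  refine ⟨fun r m => N (2 * r + 2) (deletionBound t₀ (3 * k) m), fun r m n G hG A hA => ?_⟩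
  obtain ⟨L, hL, B, hBA, hBm, hB⟩ := hsff (2 * r + 2) _ n G hG A hA
  have hrank : (flipsMatrix L).rank ≤ 3 * k := (rank_flipsMatrix_le L).trans (by omega)
  obtain ⟨S, hS, B', hB'B, hB'm, hB'S, hB'⟩ := (isToggleMatrix_flipsMatrix G L).exists_rIndepAvoid
    (hws n G hG) hrank (disjoint_empty_right B) (fun u hu v hv huv p _ => hB u hu v hv huv p) m hBm
  refine ⟨S, hS.trans ?_, B', hB'B.trans hBA, hB'm, by simpa using hB'S, by simpa using hB'⟩
  calc 3 * k * t₀ = k * (3 * t₀) := by ring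
    _ ≤ k * (t₀ ^ 2 + t₀ - 2) := Nat.mul_le_mul_left k (by omega)

/-- The main induction: a class that is weakly sparse with parameter `t₀` (with
`t₀² + t₀ - 2 ≥ 8t₀`) and strongly flip-flat with flip-number `k` is uniformly
almost-wide with constant `k(t₀² + t₀ - 2)`. -/
theorem sff_weaklySparse_implies_uaw (C : ∀ n : ℕ, SimpleGraph (Fin n) → Prop)
    (t₀ k : ℕ) (N : ℕ → ℕ → ℕ) (ht₀ : 0 < t₀) (hbig : 8 * t₀ ≤ t₀ ^ 2 + t₀ - 2)
    (hws : ∀ (n : ℕ) (G : SimpleGraph (Fin n)), C n G → ¬ HasBiclique G t₀)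
    (hsff : SFF C k N) :
    ∃ N' : ℕ → ℕ → ℕ, UAW C (k * (t₀ ^ 2 + t₀ - 2)) N' :=
  sff_weaklySparse_implies_uaw_general C t₀ k N hbig hws hsff
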